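/- Let q be a prime power and let integers satisfy 0 = u_0 < u_1 < u_2 < ... < u_s < u_{s+1} = k and 1 ≤ s ≤ t. Set n = t(q^k - 1)/(q - 1) - Σ_{i=1}^{s} (q^{u_i} - 1)/(q - 1) and d = t·q^{k-1} - Σ_{i=1}^{s} q^{u_i - 1}. Then there exists an [n,k]_q linear code C with minimum Hamming distance d such that d + Σ_{i=1}^{k-1} ⌈d/q^i⌉ = n, i.e., C is a Griesmer code. -/

import Mathlib

open Finset

/-- The Hamming weight of a vector. -/
noncomputable def hwt {F : Type} [Zero F] {n : ℕ} (c : Fin n → F) : ℕ :=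
  Nat.card {i : Fin n // c i ≠ 0}

/-- The subcode support weight of a subspace of `F^n`. -/
noncomputable def suppWt {F : Type} [Field F] {n : ℕ} (X : Submodule F (Fin n → F)) : ℕ :=
  Nat.card {i : Fin n // ∃ x ∈ X, x i ≠ 0}

/-- The minimum Hamming distance of a linear code. -/
noncomputable def minDist {F : Type} [Field F] {n : ℕ} (C : Submodule F (Fin n → F)) : ℕ :=
  sInf {w | ∃ c ∈ C, c ≠ 0 ∧ hwt c = w}

/-- The `r`-th generalized Hamming weight of a linear code. -/
noncomputable def ghw {F : Type} [Field F] {n : ℕ} (C : Submodule F (Fin n → F)) (r : ℕ) : ℕ :=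
  sInf {w | ∃ U : Submodule F (Fin n → F), U ≤ C ∧ Module.finrank F ↥U = r ∧ suppWt U = w}

/-- `sswd C r j` = the number of `r`-dimensional subspaces `U` of `C` with support weight `j`. -/
noncomputable def sswd {F : Type} [Field F] {n : ℕ} (C : Submodule F (Fin n → F)) (r j : ℕ) : ℕ :=
  Nat.card {U : Submodule F (Fin n → F) // U ≤ C ∧ Module.finrank F ↥U = r ∧ suppWt U = j}

/-- `wdist C j` = the number of codewords of `C` of Hamming weight `j`. -/
noncomputable def wdist {F : Type} [Field F] {n : ℕ} (C : Submodule F (Fin n → F)) (j : ℕ) : ℕ :=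
  Nat.card {c : Fin n → F // c ∈ C ∧ hwt c = j}

/-- The q-ary Gaussian binomial coefficient `[k choose r]_q`. -/
def gbinom (q k r : ℕ) : ℕ :=
  (∏ i ∈ Finset.range r, (q ^ k - q ^ i)) / (∏ i ∈ Finset.range r, (q ^ r - q ^ i))

/-- Ceiling division of naturals: `cdiv a b = ⌈a/b⌉`. -/
def cdiv (a b : ℕ) : ℕ := (a + b - 1) / b

open scoped LinearAlgebra.Projectivization

/-! Belov's construction. The columns of a generator matrix are `t` copies of the points of
`PG(k-1, q)`, with the points of the span `U_i` of the first `u_i` unit vectors deleted from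
the `i`-th copy. A nonzero functional `φ` is nonzero on `q^(k-1)` points of each copy and on at
most `q^(u_i - 1)` points of `U_i`, with equality for the first coordinate functional; this gives
the length `n` and the minimum distance `d`. Because the exponents `u_i - 1` are distinct and
smaller than `k - 1`, `⌈d / q^j⌉ = t q^(k-1-j) - ∑_{u_i > j} q^(u_i-1-j)`, and summing over `j`
gives `n`. -/

lemma Nat.card_subtype_add_card_subtype_not {α : Type*} [Finite α] (p : α → Prop) :
    Nat.card {x // p x} + Nat.card {x // ¬ p x} = Nat.card α := by
  classical
  rw [← Nat.card_sum, Nat.card_congr (Equiv.sumCompl p)]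

lemma Nat.card_subtype_compl_add_card_subtype {α : Type*} [Finite α] (R : Set α)
    (p : α → Prop) :
    Nat.card {x : ↥Rᶜ // p x} + Nat.card {x : R // p x} = Nat.card {x // p x} := by
  classical
  let e (S : Set α) : {x : S // p x} ≃ {y : {x // p x} // y.1 ∈ S} :=
    ⟨fun x => ⟨⟨x.1.1, x.2⟩, x.1.2⟩, fun y => ⟨⟨y.1.1, y.2⟩, y.1.2⟩, fun _ => rfl, fun _ => rfl⟩
  rw [add_comm, ← Nat.card_sum]
  exact Nat.card_congr ((Equiv.sumCongr (e R) (e Rᶜ)).trans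
    (Equiv.sumCompl fun y : {x // p x} => y.1 ∈ R))

namespace Projectivization

section DivisionRing
variable {K V : Type*} [DivisionRing K] [AddCommGroup V] [Module K V]

lemma rep_mk_iff {p : V → Prop} (hp : ∀ (a : Kˣ) v, p (a • v) ↔ p v) (v : V) (hv : v ≠ 0) :
    p (mk K v hv).rep ↔ p v := by
  obtain ⟨a, ha⟩ := exists_smul_eq_mk_rep K v hv
  rw [← ha, hp]

noncomputable def equivRepMem (W : Submodule K V) : ℙ K W ≃ {P : ℙ K V // P.rep ∈ W} :=
  Equiv.ofBijective
    (fun P => ⟨P.map W.subtype W.injective_subtype, by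
      rw [← P.mk_rep, map_mk]
      exact (rep_mk_iff (p := (· ∈ W)) (fun a v => W.smul_mem_iff' a) _ _).2 P.rep.2⟩)
    ⟨fun P Q h => map_injective _ W.injective_subtype (congrArg Subtype.val h), fun P =>
      ⟨mk K ⟨P.1.rep, P.2⟩ (by simpa using P.1.rep_nonzero), by
        ext1; simp [map_mk, mk_rep]⟩⟩

lemma rep_equivRepMem_iff {W : Submodule K V} {p : V → Prop}
    (hp : ∀ (a : Kˣ) v, p (a • v) ↔ p v) (Q : ℙ K W) :
    p (equivRepMem W Q).1.rep ↔ p Q.rep := by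
  conv_lhs => rw [← Q.mk_rep]
  exact rep_mk_iff hp _ _

end DivisionRing

section Field
variable {F V : Type*} [Field F] [Finite F] [AddCommGroup V] [Module F V]

lemma card_rep_mem (W : Submodule F V) :
    Nat.card {P : ℙ F V // P.rep ∈ W} = ∑ i ∈ range (Module.finrank F W), Nat.card F ^ i := by
  rw [← Nat.card_congr (equivRepMem W), card_of_finrank F W rfl]

lemma card_apply_rep_ne_zero [FiniteDimensional F V] {f : Module.Dual F V} (hf : f ≠ 0) :
    Nat.card {P : ℙ F V // f P.rep ≠ 0} = Nat.card F ^ (Module.finrank F V - 1) := by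
  have : Finite V := Module.finite_of_finite F
  have hker := Module.Dual.finrank_ker_add_one_of_ne_zero hf
  have hsplit := Nat.card_subtype_add_card_subtype_not fun P : ℙ F V => f P.rep = 0
  rw [card_of_finrank F V rfl, ← hker, sum_range_succ,
    show Nat.card {P : ℙ F V // f P.rep = 0} = _ from card_rep_mem (LinearMap.ker f)] at hsplit
  rw [← hker, Nat.add_sub_cancel]
  exact Nat.add_left_cancel hsplit

lemma card_rep_mem_and_apply_ne_zero (W : Submodule F V) [FiniteDimensional F W]
    {f : Module.Dual F V} (hW : ¬ W ≤ LinearMap.ker f) :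
    Nat.card {P : ℙ F V // P.rep ∈ W ∧ f P.rep ≠ 0} = Nat.card F ^ (Module.finrank F W - 1) := by
  have hg : f ∘ₗ W.subtype ≠ 0 := fun h => hW fun v hv => by
    simpa using LinearMap.congr_fun h ⟨v, hv⟩
  rw [← card_apply_rep_ne_zero hg]
  refine Nat.card_congr ((Equiv.subtypeSubtypeEquivSubtypeInter _ _).symm.trans
    (Equiv.subtypeEquiv (equivRepMem W) fun Q => ?_).symm)
  exact (rep_equivRepMem_iff (p := (f · ≠ 0)) (fun a v => by simp [Units.smul_def]) Q).symm

lemma card_rep_mem_and_apply_ne_zero_le (W : Submodule F V) [FiniteDimensional F W]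
    (f : Module.Dual F V) :
    Nat.card {P : ℙ F V // P.rep ∈ W ∧ f P.rep ≠ 0} ≤ Nat.card F ^ (Module.finrank F W - 1) := by
  by_cases hW : W ≤ LinearMap.ker f
  · have : IsEmpty {P : ℙ F V // P.rep ∈ W ∧ f P.rep ≠ 0} := ⟨fun P => P.2.2 (hW P.2.1)⟩
    simp
  · exact (card_rep_mem_and_apply_ne_zero W hW).le

end Field

end Projectivization

section CoordSpan
variable {F : Type*} [Field F]

def coordSpan (k m : ℕ) : Submodule F (Fin k → F) :=
  Submodule.span F (Set.range fun j : {j : Fin k // (j : ℕ) < m} => Pi.single j.1 1)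

lemma finrank_coordSpan {k m : ℕ} (h : m ≤ k) :
    Module.finrank F (coordSpan (F := F) k m) = m := by
  have hli : LinearIndependent F
      fun j : {j : Fin k // (j : ℕ) < m} => (Pi.single j.1 1 : Fin k → F) :=
    (Pi.linearIndependent_single_one (Fin k) F).comp _ Subtype.val_injective
  rw [coordSpan, finrank_span_eq_card hli, Fintype.card_subtype, Fin.card_filter_val_lt]
  omega

lemma not_coordSpan_le_ker_proj_zero {k m : ℕ} (hm : 0 < m) (hk : 0 < k) :
    ¬ coordSpan (F := F) k m ≤ LinearMap.ker (LinearMap.proj ⟨0, hk⟩) := fun h => by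
  simpa using h (Submodule.subset_span ⟨⟨⟨0, hk⟩, hm⟩, rfl⟩)

end CoordSpan

section RemovedPoints
variable {F V T ι : Type*} [Field F] [Finite F] [AddCommGroup V] [Module F V]

def removedPoints (σ : ι → T) (W : ι → Submodule F V) : Set (T × ℙ F V) :=
  {x | ∃ i, σ i = x.1 ∧ x.2.rep ∈ W i}

lemma card_removedPoints_and [FiniteDimensional F V] [Fintype ι] {σ : ι → T}
    (hσ : σ.Injective) (W : ι → Submodule F V) (p : ℙ F V → Prop) :
    Nat.card {x : removedPoints σ W // p x.1.2} =
      ∑ i, Nat.card {P : ℙ F V // P.rep ∈ W i ∧ p P} := by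
  have : Finite V := Module.finite_of_finite F
  rw [← Nat.card_sigma]
  refine (Nat.card_congr (Equiv.ofBijective
    (fun y => ⟨⟨(σ y.1, y.2.1), y.1, rfl, y.2.2.1⟩, y.2.2.2⟩) ⟨fun y z h => ?_, fun x => ?_⟩)).symm
  · obtain ⟨h₁, h₂⟩ := Prod.mk.inj (congrArg (fun x => x.1.1) h)
    exact Sigma.subtype_ext (hσ h₁) h₂
  · obtain ⟨⟨⟨j, P⟩, i, hi, hP⟩, hp⟩ := x
    obtain rfl : σ i = j := hi
    exact ⟨⟨i, P, hP, hp⟩, rfl⟩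

lemma card_compl_removedPoints_and_add_sum [FiniteDimensional F V] [Fintype T] [Fintype ι]
    {σ : ι → T} (hσ : σ.Injective) (W : ι → Submodule F V) (p : ℙ F V → Prop) :
    Nat.card {x : ↥(removedPoints σ W)ᶜ // p x.1.2} +
        ∑ i, Nat.card {P : ℙ F V // P.rep ∈ W i ∧ p P} =
      Fintype.card T * Nat.card {P : ℙ F V // p P} := by
  have : Finite V := Module.finite_of_finite F
  rw [← card_removedPoints_and hσ, Nat.card_subtype_compl_add_card_subtype (removedPoints σ W)
    (fun x => p x.2), Nat.card_congr (Equiv.subtypeProdEquivSigmaSubtype fun _ P => p P),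
    Nat.card_sigma, sum_const, card_univ, smul_eq_mul]

end RemovedPoints

section Codes
variable {F : Type} [Field F]

lemma hwt_zero {n : ℕ} : hwt (0 : Fin n → F) = 0 := by
  simp [hwt]

lemma minDist_eq_of_le_hwt {n d : ℕ} {C : Submodule F (Fin n → F)}
    (hle : ∀ c ∈ C, c ≠ 0 → d ≤ hwt c) {c₀ : Fin n → F} (hc₀ : c₀ ∈ C) (hne : c₀ ≠ 0)
    (hd : hwt c₀ = d) : minDist C = d :=
  le_antisymm (Nat.sInf_le ⟨c₀, hc₀, hne, hd⟩) (le_csInf ⟨d, c₀, hc₀, hne, hd⟩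
    fun _ ⟨c, hc, hne, hw⟩ => hw ▸ hle c hc hne)

variable {V : Type*} [AddCommGroup V] [Module F V]

def evalCode {n : ℕ} (col : Fin n → V) : Module.Dual F V →ₗ[F] (Fin n → F) :=
  LinearMap.pi fun j => Module.Dual.eval F V (col j)

lemma hwt_evalCode {α : Type*} {n : ℕ} (col : α → V) (e : α ≃ Fin n) (φ : Module.Dual F V) :
    hwt (evalCode (col ∘ e.symm) φ) = Nat.card {x // φ (col x) ≠ 0} :=
  Nat.card_congr (Equiv.subtypeEquiv e.symm fun _ => Iff.rfl)

end Codes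

section Construction
variable {F : Type} [Field F] [Finite F] {V T ι : Type*} [AddCommGroup V] [Module F V]
  [FiniteDimensional F V] [Fintype T] [Fintype ι] {σ : ι → T}

open Projectivization

lemma hwt_evalCode_add_sum (hσ : σ.Injective) (W : ι → Submodule F V) {n : ℕ}
    (e : ↥(removedPoints σ W)ᶜ ≃ Fin n) {φ : Module.Dual F V} (hφ : φ ≠ 0) :
    hwt (evalCode ((fun x => x.1.2.rep) ∘ e.symm) φ) +
        ∑ i, Nat.card {P : ℙ F V // P.rep ∈ W i ∧ φ P.rep ≠ 0} =
      Fintype.card T * Nat.card F ^ (Module.finrank F V - 1) := by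
  rw [hwt_evalCode, ← card_apply_rep_ne_zero hφ]
  exact card_compl_removedPoints_and_add_sum hσ W (fun P => φ P.rep ≠ 0)

lemma card_compl_removedPoints_add_sum (hσ : σ.Injective) (W : ι → Submodule F V) :
    Nat.card ↥(removedPoints σ W)ᶜ +
        ∑ i, ∑ l ∈ range (Module.finrank F (W i)), Nat.card F ^ l =
      Fintype.card T * ∑ l ∈ range (Module.finrank F V), Nat.card F ^ l := by
  have := card_compl_removedPoints_and_add_sum hσ W (fun _ => True)
  simp only [and_true, card_rep_mem] at this
  rwa [Nat.card_congr (Equiv.subtypeUnivEquiv fun _ => trivial),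
    Nat.card_congr (Equiv.subtypeUnivEquiv fun _ => trivial), card_of_finrank F V rfl] at this

theorem exists_finrank_minDist_eq_of_removedPoints (hσ : σ.Injective) (W : ι → Submodule F V)
    {φ₀ : Module.Dual F V} (hφ₀ : φ₀ ≠ 0) (hW : ∀ i, ¬ W i ≤ LinearMap.ker φ₀) {n d : ℕ}
    (hn : n + ∑ i, ∑ l ∈ range (Module.finrank F (W i)), Nat.card F ^ l =
      Fintype.card T * ∑ l ∈ range (Module.finrank F V), Nat.card F ^ l)
    (hd : d + ∑ i, Nat.card F ^ (Module.finrank F (W i) - 1) =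
      Fintype.card T * Nat.card F ^ (Module.finrank F V - 1))
    (hd0 : 0 < d) :
    ∃ C : Submodule F (Fin n → F), Module.finrank F C = Module.finrank F V ∧ minDist C = d := by
  have : Finite V := Module.finite_of_finite F
  have hcard : Nat.card ↥(removedPoints σ W)ᶜ = n := by
    have := card_compl_removedPoints_add_sum hσ W
    omega
  set e := (Finite.equivFin ↥(removedPoints σ W)ᶜ).trans (finCongr hcard)
  set L := evalCode (F := F) ((fun x => x.1.2.rep) ∘ e.symm)
  have hle : ∀ φ ≠ 0, d ≤ hwt (L φ) := fun φ hφ => by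
    have : hwt (L φ) + _ = _ := hwt_evalCode_add_sum hσ W e hφ
    have := sum_le_sum fun i (_ : i ∈ univ) => card_rep_mem_and_apply_ne_zero_le (W i) φ
    omega
  have heq : hwt (L φ₀) = d := by
    have : hwt (L φ₀) + _ = _ := hwt_evalCode_add_sum hσ W e hφ₀
    rw [sum_congr rfl fun i _ => card_rep_mem_and_apply_ne_zero (W i) (hW i)] at this
    omega
  have hker : ∀ φ, L φ = 0 → φ = 0 := fun φ h => by
    by_contra hφ
    have := hle φ hφ
    rw [h, hwt_zero] at this
    omega
  refine ⟨LinearMap.range L, ?_, minDist_eq_of_le_hwt ?_ (LinearMap.mem_range_self L φ₀) ?_ heq⟩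
  · rw [LinearMap.finrank_range_of_inj ((injective_iff_map_eq_zero L).2 hker),
      Subspace.dual_finrank_eq]
  · rintro _ ⟨φ, rfl⟩ hL
    exact hle φ fun h => hL (h ▸ map_zero L)
  · exact fun h => hφ₀ (hker φ₀ h)

end Construction

theorem exists_finrank_minDist_eq_of_coordSpan {F : Type} [Field F] [Finite F] {k s t n d : ℕ}
    (hk : 0 < k) (hst : s ≤ t) {u : ℕ → ℕ} (hpos : ∀ i ∈ Icc 1 s, 0 < u i)
    (hle : ∀ i ∈ Icc 1 s, u i ≤ k)
    (hn : n + ∑ i ∈ Icc 1 s, ∑ l ∈ range (u i), Nat.card F ^ l =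
      t * ∑ l ∈ range k, Nat.card F ^ l)
    (hd : d + ∑ i ∈ Icc 1 s, Nat.card F ^ (u i - 1) = t * Nat.card F ^ (k - 1)) (hd0 : 0 < d) :
    ∃ C : Submodule F (Fin n → F), Module.finrank F C = k ∧ minDist C = d := by
  let σ : Icc 1 s → Fin t := fun i => ⟨i - 1, by have := mem_Icc.1 i.2; omega⟩
  have hσ : σ.Injective := fun i j h => by
    have := mem_Icc.1 i.2
    have := mem_Icc.1 j.2
    simp only [σ, Fin.mk.injEq] at h
    exact Subtype.ext (by omega)
  have hφ₀ : (LinearMap.proj ⟨0, hk⟩ : Module.Dual F (Fin k → F)) ≠ 0 := fun h => by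
    simpa using LinearMap.congr_fun h (Pi.single ⟨0, hk⟩ 1)
  have hrank : ∀ i : Icc 1 s, Module.finrank F (coordSpan (F := F) k (u i)) = u i :=
    fun i => finrank_coordSpan (hle i i.2)
  obtain ⟨C, hC, hCd⟩ := exists_finrank_minDist_eq_of_removedPoints hσ
    (fun i => coordSpan k (u i)) hφ₀ (fun i => not_coordSpan_le_ker_proj_zero (hpos i i.2) hk)
    (by simpa [hrank, sum_attach (Icc 1 s) fun i => ∑ l ∈ range (u i), Nat.card F ^ l] using hn)
    (by simpa [hrank, sum_attach (Icc 1 s) fun i => Nat.card F ^ (u i - 1)] using hd) hd0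
  exact ⟨C, by rw [hC, Module.finrank_fin_fun], hCd⟩

section Griesmer
variable {ι : Type*} {q k : ℕ} {J : Finset ι} {m : ι → ℕ}

lemma cdiv_eq_of_add_eq_mul {a b c r : ℕ} (h : a + r = b * c) (hr : r < b) : cdiv a b = c := by
  rw [Nat.mul_comm] at h
  rw [cdiv, Nat.div_eq_of_lt_le]
  · omega
  · rw [Nat.succ_mul]
    omega

lemma add_sum_Icc_cdiv_eq_sum_range (hk : 0 < k) (d : ℕ) :
    d + ∑ i ∈ Icc 1 (k - 1), cdiv d (q ^ i) = ∑ i ∈ range k, cdiv d (q ^ i) := by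
  obtain ⟨k, rfl⟩ : ∃ k', k = k' + 1 := ⟨k - 1, by omega⟩
  rw [sum_range_succ', Nat.add_sub_cancel, ← Ico_add_one_right_eq_Icc, sum_Ico_eq_sum_range]
  simp [cdiv, add_comm]

lemma sum_pow_filter_le_lt (hq : 2 ≤ q) (hpos : ∀ j ∈ J, 0 < m j) (hinj : Set.InjOn m J)
    (i : ℕ) : ∑ j ∈ J with m j ≤ i, q ^ (m j - 1) < q ^ i := by
  classical
  have hinj' : Set.InjOn (fun j => m j - 1) ↑(J.filter fun j => m j ≤ i) :=
    fun a ha b hb hab => by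
      simp only [coe_filter, Set.mem_ofPred_eq] at ha hb
      have := hpos a ha.1
      have := hpos b hb.1
      exact hinj ha.1 hb.1 (by simp only at hab; omega)
  rw [← sum_image hinj']
  refine Nat.geomSum_lt hq fun e he => ?_
  obtain ⟨j, hj, rfl⟩ := mem_image.1 he
  have := hpos j (mem_filter.1 hj).1
  have := (mem_filter.1 hj).2
  omega

lemma sum_pow_sub_one_lt (hq : 2 ≤ q) (hpos : ∀ j ∈ J, 0 < m j) (hlt : ∀ j ∈ J, m j < k)
    (hinj : Set.InjOn m J) : ∑ j ∈ J, q ^ (m j - 1) < q ^ (k - 1) := by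
  have := sum_pow_filter_le_lt hq hpos hinj (k - 1)
  rwa [filter_true_of_mem fun j hj => by have := hlt j hj; omega] at this

lemma cdiv_add_sum_filter_lt (hq : 2 ≤ q) (hpos : ∀ j ∈ J, 0 < m j) (hinj : Set.InjOn m J)
    {t d i : ℕ} (hi : i < k) (hd : d + ∑ j ∈ J, q ^ (m j - 1) = t * q ^ (k - 1)) :
    cdiv d (q ^ i) + ∑ j ∈ J with i < m j, q ^ (m j - 1 - i) = t * q ^ (k - 1 - i) := by
  set A := ∑ j ∈ J with i < m j, q ^ (m j - 1 - i)
  set B := ∑ j ∈ J with m j ≤ i, q ^ (m j - 1)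
  have hsplit : ∑ j ∈ J, q ^ (m j - 1) = q ^ i * A + B := by
    rw [← sum_filter_add_sum_filter_not J (fun j => i < m j), mul_sum]
    simp only [not_lt]
    congr 1
    refine sum_congr rfl fun j hj => ?_
    rw [← pow_add]
    congr 1
    have := (mem_filter.1 hj).2
    omega
  have hQ : q ^ i * (t * q ^ (k - 1 - i)) = t * q ^ (k - 1) := by
    rw [mul_left_comm, ← pow_add]
    congr 2
    omega
  have hB := sum_pow_filter_le_lt hq hpos hinj i
  have hA : A ≤ t * q ^ (k - 1 - i) :=
    Nat.le_of_mul_le_mul_left (by rw [hQ]; omega) (pow_pos (by omega) i)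
  rw [cdiv_eq_of_add_eq_mul (c := t * q ^ (k - 1 - i) - A) (r := B) ?_ hB]
  · omega
  · rw [Nat.mul_sub, hQ]
    omega

lemma sum_sum_filter_lt_eq_sum_geom (hle : ∀ j ∈ J, m j ≤ k) :
    ∑ i ∈ range k, ∑ j ∈ J with i < m j, q ^ (m j - 1 - i) =
      ∑ j ∈ J, ∑ l ∈ range (m j), q ^ l := by
  rw [sum_comm' (t' := J) (s' := fun j => range (m j))]
  · exact sum_congr rfl fun j _ => sum_range_reflect (q ^ ·) (m j)
  · intro i j
    simp only [mem_range, mem_filter]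
    constructor
    · rintro ⟨-, hj, hi⟩
      exact ⟨hi, hj⟩
    · rintro ⟨hi, hj⟩
      exact ⟨(hle j hj).trans_lt' hi, hj, hi⟩

lemma sum_range_cdiv_add_sum_geom (hq : 2 ≤ q) (hpos : ∀ j ∈ J, 0 < m j)
    (hle : ∀ j ∈ J, m j ≤ k) (hinj : Set.InjOn m J) {t d : ℕ}
    (hd : d + ∑ j ∈ J, q ^ (m j - 1) = t * q ^ (k - 1)) :
    ∑ i ∈ range k, cdiv d (q ^ i) + ∑ j ∈ J, ∑ l ∈ range (m j), q ^ l =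
      t * ∑ l ∈ range k, q ^ l := by
  rw [← sum_sum_filter_lt_eq_sum_geom hle, ← sum_add_distrib, ← sum_range_reflect (q ^ ·) k,
    mul_sum]
  exact sum_congr rfl fun i hi => cdiv_add_sum_filter_lt hq hpos hinj (mem_range.1 hi) hd

end Griesmer

lemma strictMonoOn_Icc_zero_of_lt_succ {u : ℕ → ℕ} {N : ℕ}
    (h : ∀ i ∈ Icc 1 N, u (i - 1) < u i) : StrictMonoOn u (Set.Icc 0 N) :=
  strictMonoOn_of_lt_add_one Set.ordConnected_Icc fun a _ _ ha => by
    simpa using h (a + 1) (mem_Icc.2 ⟨by omega, ha.2⟩)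

/-- Theorem `xxd2` (b): existence of a code meeting the Griesmer bound. -/
theorem stmt_2 (q : ℕ) (F : Type) [Field F] [Fintype F] (hq : Fintype.card F = q)
    (k s t : ℕ) (hs : 1 ≤ s) (hst : s ≤ t) (u : ℕ → ℕ)
    (hu0 : u 0 = 0) (huk : u (s + 1) = k)
    (humono : ∀ i ∈ Finset.Icc 1 (s + 1), u (i - 1) < u i) :
    ∃ C : Submodule F
        (Fin (t * ((q ^ k - 1) / (q - 1)) - ∑ i ∈ Finset.Icc 1 s, (q ^ u i - 1) / (q - 1)) → F),
      Module.finrank F ↥C = k ∧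
      minDist C = t * q ^ (k - 1) - ∑ i ∈ Finset.Icc 1 s, q ^ (u i - 1) ∧
      minDist C + ∑ i ∈ Finset.Icc 1 (k - 1), cdiv (minDist C) (q ^ i) =
        t * ((q ^ k - 1) / (q - 1)) - ∑ i ∈ Finset.Icc 1 s, (q ^ u i - 1) / (q - 1) := by
  rw [← Nat.card_eq_fintype_card] at hq
  subst hq
  have hq : 2 ≤ Nat.card F := Finite.one_lt_card
  have hu := strictMonoOn_Icc_zero_of_lt_succ humono
  have hI : ∀ i ∈ Icc 1 s, i ∈ Set.Icc 0 (s + 1) ∧ 0 < i ∧ i < s + 1 := fun i hi => by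
    have := mem_Icc.1 hi
    exact ⟨⟨by omega, by omega⟩, by omega, by omega⟩
  have hpos : ∀ i ∈ Icc 1 s, 0 < u i := fun i hi => hu0 ▸ hu (by simp) (hI i hi).1 (hI i hi).2.1
  have hlt : ∀ i ∈ Icc 1 s, u i < k := fun i hi => huk ▸ hu (hI i hi).1 (by simp) (hI i hi).2.2
  have hinj : Set.InjOn u (Icc 1 s) := hu.injOn.mono fun i hi => (hI i hi).1
  have hk : 0 < k := (hpos 1 (mem_Icc.2 ⟨le_rfl, hs⟩)).trans (hlt 1 (mem_Icc.2 ⟨le_rfl, hs⟩))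
  have hsum := sum_pow_sub_one_lt hq hpos hlt hinj
  have hqk : Nat.card F ^ (k - 1) ≤ t * Nat.card F ^ (k - 1) := Nat.le_mul_of_pos_left _ (by omega)
  have hd : t * Nat.card F ^ (k - 1) - ∑ i ∈ Icc 1 s, Nat.card F ^ (u i - 1) +
      ∑ i ∈ Icc 1 s, Nat.card F ^ (u i - 1) = t * Nat.card F ^ (k - 1) := by omega
  have hG := sum_range_cdiv_add_sum_geom hq hpos (fun i hi => (hlt i hi).le) hinj hd
  simp only [Nat.geomSum_eq hq] at hG
  refine (exists_finrank_minDist_eq_of_coordSpan hk hst hpos (fun i hi => (hlt i hi).le) ?_ hd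
    (by omega)).imp fun C ⟨hCk, hCd⟩ => ⟨hCk, hCd, ?_⟩
  · simp only [Nat.geomSum_eq hq]
    omega
  · rw [hCd, add_sum_Icc_cdiv_eq_sum_range hk]
    omega
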